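/- Let K ⊂ ℝ^m be convex and compact, let C_K ≥ 0 and κ > C_K. Let φ : ℝ^m → ℝ be semiconcave with constant C_K on K, i.e. (1−s)φ(y₁) + sφ(y₂) − φ((1−s)y₁+sy₂) ≤ C_K·s(1−s)|y₁−y₂|² for all y₁, y₂ ∈ K and s ∈ [0,1], and let c : ℝ^m × ℝ^m → ℝ be such that for every x ∈ K the map y ↦ c(x,y) is strongly convex with constant κ on K: (1−s)c(x,y₁) + s·c(x,y₂) − c(x,(1−s)y₁+sy₂) ≥ κ·s(1−s)|y₁−y₂|² for all y₁, y₂ ∈ K, s ∈ [0,1]. Let μ ∈ 𝒫(K), let C(μ,ν) := inf_{γ∈Γ(μ,ν)} ∫ c dγ and Φ(ν) := ∫ φ dν. Suppose ν₁, ν₂ ∈ 𝒫(K) both maximize ν ↦ Φ(ν) − C(μ,ν) over 𝒫(K), and suppose C(μ,ν₁) and C(μ,ν₂) are attained by couplings γ₁ ∈ Γ(μ,ν₁) and γ₂ ∈ Γ(μ,ν₂). Then ν₁ = ν₂, i.e. the maximizer of ν ↦ Φ(ν) − C(μ,ν) over 𝒫(K) is unique. -/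

import Mathlib

open MeasureTheory Metric Set
open scoped RealInnerProductSpace ENNReal

noncomputable section

/-- `ℝ^m` with its Euclidean (inner product) structure. -/
abbrev Em (m : ℕ) := EuclideanSpace ℝ (Fin m)

namespace Paper

variable {m : ℕ}

/-- `γ ∈ Γ(μ,ν)`: `γ` is a transport plan (coupling) between `μ` and `ν`. -/
def IsCoupling (γ : Measure (Em m × Em m)) (μ ν : Measure (Em m)) : Prop :=
  γ.map Prod.fst = μ ∧ γ.map Prod.snd = ν

/-- The quadratic transport cost of a plan. -/
def cost2 (γ : Measure (Em m × Em m)) : ℝ :=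
  ∫ p, ‖p.1 - p.2‖ ^ 2 ∂γ

/-- `γ ∈ Γ₂(μ,ν)`: `γ` is a coupling attaining the infimum defining `W₂(μ,ν)`. -/
def IsOptCoupling (γ : Measure (Em m × Em m)) (μ ν : Measure (Em m)) : Prop :=
  IsCoupling γ μ ν ∧
    ∀ γ' : Measure (Em m × Em m), IsCoupling γ' μ ν → cost2 γ ≤ cost2 γ'

/-- The 2-Wasserstein distance. -/
def W2 (μ ν : Measure (Em m)) : ℝ :=
  Real.sqrt (sInf {r : ℝ |
    ∃ γ : Measure (Em m × Em m), IsCoupling γ μ ν ∧ r = cost2 γ})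

/-- The 1-Wasserstein distance. -/
def W1 (μ ν : Measure (Em m)) : ℝ :=
  sInf {r : ℝ |
    ∃ γ : Measure (Em m × Em m), IsCoupling γ μ ν ∧ r = ∫ p, ‖p.1 - p.2‖ ∂γ}

/-- The topological support of a measure on a metric space. -/
def msupport {X : Type*} [PseudoMetricSpace X] [MeasurableSpace X] (μ : Measure X) : Set X :=
  {x | ∀ r > (0 : ℝ), 0 < μ (ball x r)}

/-- The `R`-fattening `B_R(μ)` of the support of `μ`. -/
def fattening (μ : Measure (Em m)) (R : ℝ) : Set (Em m) :=
  ⋃ x ∈ msupport μ, ball x R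

/-- `μ ∈ 𝒫_c(ℝ^m)`: `μ` is concentrated on a compact set. -/
def IsCptSupp (μ : Measure (Em m)) : Prop :=
  ∃ K : Set (Em m), IsCompact K ∧ μ Kᶜ = 0

/-- `∫ ⟨α(x), y - x⟩ dγ`. -/
def pairing (α : Em m → Em m) (γ : Measure (Em m × Em m)) : ℝ :=
  ∫ p : Em m × Em m, (inner ℝ (α p.1) (p.2 - p.1) : ℝ) ∂γ

/-- `α ∈ ∂⁺U(μ)`, the localized Fréchet superdifferential of `U` at `μ`. -/
def InSuperDiff (U : Measure (Em m) → ℝ) (μ : Measure (Em m)) (α : Em m → Em m) : Prop :=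
  MemLp α 2 μ ∧
  ∀ R > (0 : ℝ), ∀ ε > (0 : ℝ), ∃ δ > (0 : ℝ), ∀ ν : Measure (Em m),
    IsProbabilityMeasure ν → ν (fattening μ R) = 1 → W2 μ ν ≤ δ →
      U ν - U μ ≤ sSup {r : ℝ | ∃ γ, IsOptCoupling γ μ ν ∧ r = pairing α γ} + ε * W2 μ ν

/-- `β ∈ ∂⁻U(μ)`, the localized Fréchet subdifferential of `U` at `μ`. -/
def InSubDiff (U : Measure (Em m) → ℝ) (μ : Measure (Em m)) (β : Em m → Em m) : Prop :=
  MemLp β 2 μ ∧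
  ∀ R > (0 : ℝ), ∀ ε > (0 : ℝ), ∃ δ > (0 : ℝ), ∀ ν : Measure (Em m),
    IsProbabilityMeasure ν → ν (fattening μ R) = 1 → W2 μ ν ≤ δ →
      sInf {r : ℝ | ∃ γ, IsOptCoupling γ μ ν ∧ r = pairing β γ} - ε * W2 μ ν ≤ U ν - U μ

/-- `p ∈ D⁺φ(x)`, the Fréchet superdifferential of `φ` at `x`. -/
def SuperDiffPt (φ : Em m → ℝ) (x p : Em m) : Prop :=
  ∀ ε > (0 : ℝ), ∃ δ > (0 : ℝ), ∀ y : Em m, ‖y - x‖ ≤ δ →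
    φ y - φ x - (inner ℝ p (y - x) : ℝ) ≤ ε * ‖y - x‖

/-- `φ` is locally semiconcave with linear modulus on `ℝ^m`. -/
def LocSemiconcave (φ : Em m → ℝ) : Prop :=
  ∀ R > (0 : ℝ), ∃ C ≥ (0 : ℝ), ∀ x ∈ ball (0 : Em m) R, ∀ y ∈ ball (0 : Em m) R,
    ∀ t ∈ Icc (0 : ℝ) 1,
      (1 - t) * φ x + t * φ y - φ ((1 - t) • x + t • y) ≤ C * t * (1 - t) * ‖x - y‖ ^ 2

/-- The potential energy functional induced by `φ`. -/
def potential (φ : Em m → ℝ) (μ : Measure (Em m)) : ℝ :=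
  ∫ x, φ x ∂μ

end Paper

open Paper

namespace Paper

/-- The transport cost functional `C(μ,ν) = inf_{γ ∈ Γ(μ,ν)} ∫ c dγ`. -/
def Ccost {m : ℕ} (c : Em m → Em m → ℝ) (μ ν : Measure (Em m)) : ℝ :=
  sInf {r : ℝ | ∃ γ : Measure (Em m × Em m), IsCoupling γ μ ν ∧
    r = ∫ p, c p.1 p.2 ∂γ}

end Paper


namespace Statement19Aux

open ProbabilityTheory Paper

variable {m : ℕ}

lemma glue_meas_fst (μ : Measure (Em m)) [IsProbabilityMeasure μ]
    (k₁ k₂ : Kernel (Em m) (Em m)) [IsMarkovKernel k₁] [IsMarkovKernel k₂]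
    {s : Set (Em m)} (hs : MeasurableSet s) :
    (μ ⊗ₘ (k₁ ×ₖ k₂)) {p | p.2.1 ∈ s} = (μ ⊗ₘ k₁) {p | p.2 ∈ s} := by
  have m1 : MeasurableSet {p : Em m × (Em m × Em m) | p.2.1 ∈ s} :=
    (measurable_fst.comp measurable_snd) hs
  have m2 : MeasurableSet {p : Em m × Em m | p.2 ∈ s} := measurable_snd hs
  rw [Measure.compProd_apply m1, Measure.compProd_apply m2]
  congr 1; funext x
  have h1 : (Prod.mk x ⁻¹' {p : Em m × (Em m × Em m) | p.2.1 ∈ s}) = s ×ˢ Set.univ := by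
    ext q; simp
  have h2 : (Prod.mk x ⁻¹' {p : Em m × Em m | p.2 ∈ s}) = s := by ext q; simp
  rw [h1, h2, Kernel.prod_apply, Measure.prod_prod, measure_univ, mul_one]

lemma glue_meas_snd (μ : Measure (Em m)) [IsProbabilityMeasure μ]
    (k₁ k₂ : Kernel (Em m) (Em m)) [IsMarkovKernel k₁] [IsMarkovKernel k₂]
    {s : Set (Em m)} (hs : MeasurableSet s) :
    (μ ⊗ₘ (k₁ ×ₖ k₂)) {p | p.2.2 ∈ s} = (μ ⊗ₘ k₂) {p | p.2 ∈ s} := by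
  have m1 : MeasurableSet {p : Em m × (Em m × Em m) | p.2.2 ∈ s} :=
    (measurable_snd.comp measurable_snd) hs
  have m2 : MeasurableSet {p : Em m × Em m | p.2 ∈ s} := measurable_snd hs
  rw [Measure.compProd_apply m1, Measure.compProd_apply m2]
  congr 1; funext x
  have h1 : (Prod.mk x ⁻¹' {p : Em m × (Em m × Em m) | p.2.2 ∈ s}) = Set.univ ×ˢ s := by
    ext q; simp
  have h2 : (Prod.mk x ⁻¹' {p : Em m × Em m | p.2 ∈ s}) = s := by ext q; simp
  rw [h1, h2, Kernel.prod_apply, Measure.prod_prod, measure_univ, one_mul]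

lemma glue_int_fst (μ : Measure (Em m)) [IsProbabilityMeasure μ]
    (k₁ k₂ : Kernel (Em m) (Em m)) [IsMarkovKernel k₁] [IsMarkovKernel k₂]
    (g : Em m × Em m → ℝ) (hg : Continuous g)
    (h1 : Integrable (fun p : Em m × (Em m × Em m) => g (p.1, p.2.1)) (μ ⊗ₘ (k₁ ×ₖ k₂)))
    (h2 : Integrable g (μ ⊗ₘ k₁)) :
    ∫ p, g (p.1, p.2.1) ∂(μ ⊗ₘ (k₁ ×ₖ k₂)) = ∫ p, g p ∂(μ ⊗ₘ k₁) := by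
  rw [Measure.integral_compProd h1, Measure.integral_compProd h2]
  congr 1; funext x
  have hfst : ∫ y, g (x, y) ∂(k₁ x) = ∫ y, g (x, y) ∂((k₁ x).prod (k₂ x)).fst := by
    rw [Measure.fst_prod]
  have hmeas : AEStronglyMeasurable (fun y => g (x, y))
      (Measure.map Prod.fst ((k₁ x).prod (k₂ x))) :=
    (hg.comp (continuous_const.prodMk continuous_id)).aestronglyMeasurable
  rw [Kernel.prod_apply, hfst, Measure.fst, integral_map measurable_fst.aemeasurable hmeas]

lemma glue_int_snd (μ : Measure (Em m)) [IsProbabilityMeasure μ]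
    (k₁ k₂ : Kernel (Em m) (Em m)) [IsMarkovKernel k₁] [IsMarkovKernel k₂]
    (g : Em m × Em m → ℝ) (hg : Continuous g)
    (h1 : Integrable (fun p : Em m × (Em m × Em m) => g (p.1, p.2.2)) (μ ⊗ₘ (k₁ ×ₖ k₂)))
    (h2 : Integrable g (μ ⊗ₘ k₂)) :
    ∫ p, g (p.1, p.2.2) ∂(μ ⊗ₘ (k₁ ×ₖ k₂)) = ∫ p, g p ∂(μ ⊗ₘ k₂) := by
  rw [Measure.integral_compProd h1, Measure.integral_compProd h2]
  congr 1; funext x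
  have hsnd : ∫ y, g (x, y) ∂(k₂ x) = ∫ y, g (x, y) ∂((k₁ x).prod (k₂ x)).snd := by
    rw [Measure.snd_prod]
  have hmeas : AEStronglyMeasurable (fun y => g (x, y))
      (Measure.map Prod.snd ((k₁ x).prod (k₂ x))) :=
    (hg.comp (continuous_const.prodMk continuous_id)).aestronglyMeasurable
  rw [Kernel.prod_apply, hsnd, Measure.snd, integral_map measurable_snd.aemeasurable hmeas]

lemma integrable_of_conc {X : Type*} [MeasurableSpace X] (γ : Measure X) [IsFiniteMeasure γ]
    {f : X → ℝ} (hf : AEStronglyMeasurable f γ) {S : Set X} (hS : ∀ᵐ p ∂γ, p ∈ S)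
    {M : ℝ} (hM : ∀ p ∈ S, ‖f p‖ ≤ M) : Integrable f γ :=
  ⟨hf, HasFiniteIntegral.of_bounded (C := M) (by filter_upwards [hS] with p hp using hM p hp)⟩

lemma prob_of_coupling {μ ν : Measure (Em m)} [IsProbabilityMeasure μ]
    {γ : Measure (Em m × Em m)} (h : IsCoupling γ μ ν) : IsProbabilityMeasure γ := by
  constructor
  have := congrArg (fun ρ : Measure (Em m) => ρ Set.univ) h.1
  simpa [Measure.map_apply measurable_fst MeasurableSet.univ] using this

lemma coupling_conc {K : Set (Em m)} (hKm : MeasurableSet K)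
    {μ ν : Measure (Em m)} [IsProbabilityMeasure μ] [IsProbabilityMeasure ν]
    (hμ : μ K = 1) (hν : ν K = 1)
    {γ : Measure (Em m × Em m)} (h : IsCoupling γ μ ν) :
    ∀ᵐ q ∂γ, q.1 ∈ K ∧ q.2 ∈ K := by
  have e1 : ∀ᵐ q ∂γ, q.1 ∈ K := by
    refine ae_iff.2 ?_
    have h0 : γ {q : Em m × Em m | q.1 ∈ Kᶜ} = (γ.map Prod.fst) Kᶜ :=
      (Measure.map_apply measurable_fst hKm.compl).symm
    have : γ {q : Em m × Em m | q.1 ∈ Kᶜ} = 0 := by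
      rw [h0, h.1]; rwa [prob_compl_eq_zero_iff hKm]
    exact this
  have e2 : ∀ᵐ q ∂γ, q.2 ∈ K := by
    refine ae_iff.2 ?_
    have h0 : γ {q : Em m × Em m | q.2 ∈ Kᶜ} = (γ.map Prod.snd) Kᶜ :=
      (Measure.map_apply measurable_snd hKm.compl).symm
    have : γ {q : Em m × Em m | q.2 ∈ Kᶜ} = 0 := by
      rw [h0, h.2]; rwa [prob_compl_eq_zero_iff hKm]
    exact this
  exact e1.and e2

lemma costSet_bddBelow {K : Set (Em m)} (hKcpt : IsCompact K)
    (c : Em m → Em m → ℝ) (hc : Continuous fun p : Em m × Em m => c p.1 p.2)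
    (μ ν : Measure (Em m)) [IsProbabilityMeasure μ] [IsProbabilityMeasure ν]
    (hμ : μ K = 1) (hν : ν K = 1) :
    BddBelow {r : ℝ | ∃ γ : Measure (Em m × Em m), IsCoupling γ μ ν ∧
      r = ∫ p, c p.1 p.2 ∂γ} := by
  obtain ⟨M, hM⟩ := (hKcpt.prod hKcpt).exists_bound_of_continuousOn hc.continuousOn
  have hKm : MeasurableSet K := hKcpt.isClosed.measurableSet
  refine ⟨min (-M) 0, ?_⟩
  rintro r ⟨γ', hcpl, rfl⟩
  haveI : IsProbabilityMeasure γ' := prob_of_coupling hcpl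
  have hconc : ∀ᵐ q ∂γ', q.1 ∈ K ∧ q.2 ∈ K := coupling_conc hKm hμ hν hcpl
  by_cases hi : Integrable (fun p : Em m × Em m => c p.1 p.2) γ'
  · refine (min_le_left _ _).trans ?_
    have hle : (-M : ℝ) = ∫ _, (-M : ℝ) ∂γ' := by simp
    rw [hle]
    refine integral_mono_ae (integrable_const _) hi ?_
    filter_upwards [hconc] with q hq
    have hb := hM (q.1, q.2) (Set.mk_mem_prod hq.1 hq.2)
    have := abs_le.1 (by simpa [Real.norm_eq_abs] using hb)
    exact this.1
  · rw [integral_undef hi]; exact min_le_right _ _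

end Statement19Aux
/-- uniqueness of the maximizer in Theorem `thm:wass-argmax`: if `φ` is
semiconcave on the convex compact set `K` with constant `C_K`, and `y ↦ c(x,y)` is strongly
convex on `K` with constant `κ > C_K` for every `x ∈ K`, then the maximizer over `𝒫(K)` of
`ν ↦ Φ(ν) − C(μ,ν)` is unique: any two maximizers `ν₁, ν₂` whose costs `C(μ,νᵢ)` are
attained by couplings coincide. -/
theorem statement19 {m : ℕ} (K : Set (Em m)) (hKconv : Convex ℝ K) (hKcpt : IsCompact K)
    (CK κ : ℝ) (hCK : 0 ≤ CK) (hκ : CK < κ)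
    (φ : Em m → ℝ) (hφc : Continuous φ)
    (hφ : ∀ y₁ ∈ K, ∀ y₂ ∈ K, ∀ s ∈ Icc (0 : ℝ) 1,
      (1 - s) * φ y₁ + s * φ y₂ - φ ((1 - s) • y₁ + s • y₂)
        ≤ CK * s * (1 - s) * ‖y₁ - y₂‖ ^ 2)
    (c : Em m → Em m → ℝ) (hc : Continuous fun p : Em m × Em m => c p.1 p.2)
    (hconv : ∀ x ∈ K, ∀ y₁ ∈ K, ∀ y₂ ∈ K, ∀ s ∈ Icc (0 : ℝ) 1,
      κ * s * (1 - s) * ‖y₁ - y₂‖ ^ 2 ≤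
        (1 - s) * c x y₁ + s * c x y₂ - c x ((1 - s) • y₁ + s • y₂))
    (μ ν₁ ν₂ : Measure (Em m)) [IsProbabilityMeasure μ]
    [IsProbabilityMeasure ν₁] [IsProbabilityMeasure ν₂]
    (hμ : μ K = 1) (hν₁ : ν₁ K = 1) (hν₂ : ν₂ K = 1)
    (hmax₁ : ∀ ν : Measure (Em m), IsProbabilityMeasure ν → ν K = 1 →
      potential φ ν - Ccost c μ ν ≤ potential φ ν₁ - Ccost c μ ν₁)
    (hmax₂ : ∀ ν : Measure (Em m), IsProbabilityMeasure ν → ν K = 1 →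
      potential φ ν - Ccost c μ ν ≤ potential φ ν₂ - Ccost c μ ν₂)
    (γ₁ γ₂ : Measure (Em m × Em m))
    (hγ₁ : IsCoupling γ₁ μ ν₁) (hγ₂ : IsCoupling γ₂ μ ν₂)
    (ha₁ : ∫ p, c p.1 p.2 ∂γ₁ = Ccost c μ ν₁)
    (ha₂ : ∫ p, c p.1 p.2 ∂γ₂ = Ccost c μ ν₂) :
    ν₁ = ν₂ := by
  classical
  open ProbabilityTheory Statement19Aux in
  show ν₁ = ν₂
  have hKm : MeasurableSet K := hKcpt.isClosed.measurableSet
  haveI hPγ₁ : IsProbabilityMeasure γ₁ := Statement19Aux.prob_of_coupling hγ₁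
  haveI hPγ₂ : IsProbabilityMeasure γ₂ := Statement19Aux.prob_of_coupling hγ₂
  set k₁ := γ₁.condKernel with hk₁def
  set k₂ := γ₂.condKernel with hk₂def
  have hd₁ : μ ⊗ₘ k₁ = γ₁ := by
    have hfst : γ₁.fst = μ := hγ₁.1
    rw [hk₁def, ← hfst]; exact γ₁.disintegrate _
  have hd₂ : μ ⊗ₘ k₂ = γ₂ := by
    have hfst : γ₂.fst = μ := hγ₂.1
    rw [hk₂def, ← hfst]; exact γ₂.disintegrate _
  set γt : Measure (Em m × (Em m × Em m)) := μ ⊗ₘ (k₁ ×ₖ k₂) with hγtdef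
  haveI : IsProbabilityMeasure γt :=
    ⟨by rw [hγtdef, Measure.compProd_apply_univ]; exact measure_univ⟩
  -- concentration of γt on K × (K × K)
  have hμKc : μ Kᶜ = 0 := by rwa [prob_compl_eq_zero_iff hKm]
  have hν₁Kc : ν₁ Kᶜ = 0 := by rwa [prob_compl_eq_zero_iff hKm]
  have hν₂Kc : ν₂ Kᶜ = 0 := by rwa [prob_compl_eq_zero_iff hKm]
  have hmapfst : γt.map Prod.fst = μ := Measure.fst_compProd μ _
  have hae1 : ∀ᵐ p ∂γt, p.1 ∈ K := by
    refine ae_iff.2 ?_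
    have : γt {p : Em m × (Em m × Em m) | p.1 ∈ Kᶜ} = (γt.map Prod.fst) Kᶜ :=
      (Measure.map_apply measurable_fst hKm.compl).symm
    have h0 : γt {p : Em m × (Em m × Em m) | p.1 ∈ Kᶜ} = 0 := by rw [this, hmapfst]; exact hμKc
    exact h0
  have hae2 : ∀ᵐ p ∂γt, p.2.1 ∈ K := by
    refine ae_iff.2 ?_
    have h0 : γt {p : Em m × (Em m × Em m) | p.2.1 ∈ Kᶜ} = 0 := by
      rw [hγtdef, Statement19Aux.glue_meas_fst μ k₁ k₂ hKm.compl, hd₁]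
      have : γ₁ {q : Em m × Em m | q.2 ∈ Kᶜ} = (γ₁.map Prod.snd) Kᶜ :=
        (Measure.map_apply measurable_snd hKm.compl).symm
      rw [this, hγ₁.2]; exact hν₁Kc
    exact h0
  have hae3 : ∀ᵐ p ∂γt, p.2.2 ∈ K := by
    refine ae_iff.2 ?_
    have h0 : γt {p : Em m × (Em m × Em m) | p.2.2 ∈ Kᶜ} = 0 := by
      rw [hγtdef, Statement19Aux.glue_meas_snd μ k₁ k₂ hKm.compl, hd₂]
      have : γ₂ {q : Em m × Em m | q.2 ∈ Kᶜ} = (γ₂.map Prod.snd) Kᶜ :=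
        (Measure.map_apply measurable_snd hKm.compl).symm
      rw [this, hγ₂.2]; exact hν₂Kc
    exact h0
  have haeK : ∀ᵐ p ∂γt, p.1 ∈ K ∧ p.2.1 ∈ K ∧ p.2.2 ∈ K := hae1.and (hae2.and hae3)
  -- the midpoint map
  set T : Em m × (Em m × Em m) → Em m :=
    fun p => ((1 : ℝ) - 2⁻¹) • p.2.1 + (2⁻¹ : ℝ) • p.2.2 with hTdef
  have hTc : Continuous T := by
    apply Continuous.add
    · fun_prop
    · fun_prop
  have hmidK : ∀ y₁ ∈ K, ∀ y₂ ∈ K, ((1 : ℝ) - 2⁻¹) • y₁ + (2⁻¹ : ℝ) • y₂ ∈ K :=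
    fun y₁ h₁ y₂ h₂ => hKconv h₁ h₂ (by norm_num) (by norm_num) (by norm_num)
  -- bounds on K
  obtain ⟨Mφ, hMφ⟩ := hKcpt.exists_bound_of_continuousOn hφc.continuousOn
  obtain ⟨Mc, hMc⟩ := (hKcpt.prod hKcpt).exists_bound_of_continuousOn hc.continuousOn
  have hqc : Continuous fun q : Em m × Em m => ‖q.1 - q.2‖ ^ 2 :=
    (continuous_fst.sub continuous_snd).norm.pow 2
  obtain ⟨Mq, hMq⟩ := (hKcpt.prod hKcpt).exists_bound_of_continuousOn hqc.continuousOn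
  -- integrability of everything on γt
  have hint_f₁ : Integrable (fun p : Em m × (Em m × Em m) => φ p.2.1) γt :=
    Statement19Aux.integrable_of_conc γt
      ((hφc.comp (continuous_fst.comp continuous_snd)).aestronglyMeasurable)
      haeK (fun p hp => hMφ _ hp.2.1)
  have hint_f₂ : Integrable (fun p : Em m × (Em m × Em m) => φ p.2.2) γt :=
    Statement19Aux.integrable_of_conc γt
      ((hφc.comp (continuous_snd.comp continuous_snd)).aestronglyMeasurable)
      haeK (fun p hp => hMφ _ hp.2.2)
  have hint_fm : Integrable (fun p : Em m × (Em m × Em m) => φ (T p)) γt :=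
    Statement19Aux.integrable_of_conc γt ((hφc.comp hTc).aestronglyMeasurable)
      haeK (fun p hp => hMφ _ (hmidK _ hp.2.1 _ hp.2.2))
  have hint_g₁ : Integrable (fun p : Em m × (Em m × Em m) => c p.1 p.2.1) γt :=
    Statement19Aux.integrable_of_conc γt
      ((hc.comp (continuous_fst.prodMk (continuous_fst.comp continuous_snd))).aestronglyMeasurable)
      haeK (fun p hp => hMc (p.1, p.2.1) (Set.mk_mem_prod hp.1 hp.2.1))
  have hint_g₂ : Integrable (fun p : Em m × (Em m × Em m) => c p.1 p.2.2) γt :=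
    Statement19Aux.integrable_of_conc γt
      ((hc.comp (continuous_fst.prodMk (continuous_snd.comp continuous_snd))).aestronglyMeasurable)
      haeK (fun p hp => hMc (p.1, p.2.2) (Set.mk_mem_prod hp.1 hp.2.2))
  have hint_gm : Integrable (fun p : Em m × (Em m × Em m) => c p.1 (T p)) γt :=
    Statement19Aux.integrable_of_conc γt
      ((hc.comp (continuous_fst.prodMk hTc)).aestronglyMeasurable)
      haeK (fun p hp => hMc (p.1, T p) (Set.mk_mem_prod hp.1 (hmidK _ hp.2.1 _ hp.2.2)))
  have hint_q : Integrable (fun p : Em m × (Em m × Em m) => ‖p.2.1 - p.2.2‖ ^ 2) γt :=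
    Statement19Aux.integrable_of_conc γt
      ((hqc.comp ((continuous_fst.comp continuous_snd).prodMk
        (continuous_snd.comp continuous_snd))).aestronglyMeasurable)
      haeK (fun p hp => hMq (p.2.1, p.2.2) (Set.mk_mem_prod hp.2.1 hp.2.2))
  -- integrability on γ₁, γ₂
  have hconc₁ : ∀ᵐ q ∂γ₁, q.1 ∈ K ∧ q.2 ∈ K := Statement19Aux.coupling_conc hKm hμ hν₁ hγ₁
  have hconc₂ : ∀ᵐ q ∂γ₂, q.1 ∈ K ∧ q.2 ∈ K := Statement19Aux.coupling_conc hKm hμ hν₂ hγ₂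
  have hint_φγ₁ : Integrable (fun q : Em m × Em m => φ q.2) γ₁ :=
    Statement19Aux.integrable_of_conc γ₁ ((hφc.comp continuous_snd).aestronglyMeasurable)
      hconc₁ (fun q hq => hMφ _ hq.2)
  have hint_φγ₂ : Integrable (fun q : Em m × Em m => φ q.2) γ₂ :=
    Statement19Aux.integrable_of_conc γ₂ ((hφc.comp continuous_snd).aestronglyMeasurable)
      hconc₂ (fun q hq => hMφ _ hq.2)
  have hint_cγ₁ : Integrable (fun q : Em m × Em m => c q.1 q.2) γ₁ :=
    Statement19Aux.integrable_of_conc γ₁ hc.aestronglyMeasurable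
      hconc₁ (fun q hq => hMc q (Set.mk_mem_prod hq.1 hq.2))
  have hint_cγ₂ : Integrable (fun q : Em m × Em m => c q.1 q.2) γ₂ :=
    Statement19Aux.integrable_of_conc γ₂ hc.aestronglyMeasurable
      hconc₂ (fun q hq => hMc q (Set.mk_mem_prod hq.1 hq.2))
  -- the interpolated measure ν
  set ν : Measure (Em m) := γt.map T with hνdef
  haveI : IsProbabilityMeasure ν := Measure.isProbabilityMeasure_map hTc.measurable.aemeasurable
  have hνK : ν K = 1 := by
    rw [← prob_compl_eq_zero_iff hKm]
    have hTK : ∀ᵐ p ∂γt, T p ∈ K := by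
      filter_upwards [haeK] with p hp using hmidK _ hp.2.1 _ hp.2.2
    have : γt (T ⁻¹' Kᶜ) = 0 := ae_iff.1 hTK
    rw [hνdef, Measure.map_apply hTc.measurable hKm.compl]; exact this
  -- integral identities
  have e1 : ∫ p, φ p.2.1 ∂γt = potential φ ν₁ := by
    have hg := Statement19Aux.glue_int_fst μ k₁ k₂ (fun q => φ q.2)
      (hφc.comp continuous_snd) hint_f₁ (by rw [hd₁]; exact hint_φγ₁)
    rw [hγtdef]
    refine hg.trans ?_
    rw [hd₁, show potential φ ν₁ = ∫ y, φ y ∂ν₁ from rfl, ← hγ₁.2,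
      integral_map measurable_snd.aemeasurable hφc.aestronglyMeasurable]
  have e2 : ∫ p, φ p.2.2 ∂γt = potential φ ν₂ := by
    have hg := Statement19Aux.glue_int_snd μ k₁ k₂ (fun q => φ q.2)
      (hφc.comp continuous_snd) hint_f₂ (by rw [hd₂]; exact hint_φγ₂)
    rw [hγtdef]
    refine hg.trans ?_
    rw [hd₂, show potential φ ν₂ = ∫ y, φ y ∂ν₂ from rfl, ← hγ₂.2,
      integral_map measurable_snd.aemeasurable hφc.aestronglyMeasurable]
  have e3 : ∫ p, c p.1 p.2.1 ∂γt = Ccost c μ ν₁ := by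
    have hg := Statement19Aux.glue_int_fst μ k₁ k₂ (fun q => c q.1 q.2) hc hint_g₁
      (by rw [hd₁]; exact hint_cγ₁)
    rw [hγtdef]
    refine hg.trans ?_
    rw [hd₁]; exact ha₁
  have e4 : ∫ p, c p.1 p.2.2 ∂γt = Ccost c μ ν₂ := by
    have hg := Statement19Aux.glue_int_snd μ k₁ k₂ (fun q => c q.1 q.2) hc hint_g₂
      (by rw [hd₂]; exact hint_cγ₂)
    rw [hγtdef]
    refine hg.trans ?_
    rw [hd₂]; exact ha₂
  have e5 : potential φ ν = ∫ p, φ (T p) ∂γt := by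
    rw [hνdef, show potential φ (γt.map T) = ∫ y, φ y ∂(γt.map T) from rfl,
      integral_map hTc.measurable.aemeasurable hφc.aestronglyMeasurable]
  -- the coupling γ' between μ and ν, and the cost bound
  have e6 : Ccost c μ ν ≤ ∫ p, c p.1 (T p) ∂γt := by
    set γ' : Measure (Em m × Em m) := γt.map (fun p => (p.1, T p)) with hγ'def
    have hγ'm : Measurable fun p : Em m × (Em m × Em m) => (p.1, T p) :=
      measurable_fst.prodMk hTc.measurable
    have hcpl : IsCoupling γ' μ ν := by
      constructor
      · rw [hγ'def, Measure.map_map measurable_fst hγ'm]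
        exact hmapfst
      · rw [hγ'def, Measure.map_map measurable_snd hγ'm]
        rfl
    have hcost : ∫ q, c q.1 q.2 ∂γ' = ∫ p, c p.1 (T p) ∂γt := by
      rw [hγ'def, integral_map hγ'm.aemeasurable hc.aestronglyMeasurable]
    exact csInf_le
      (Statement19Aux.costSet_bddBelow hKcpt c hc μ ν hμ hνK) ⟨γ', hcpl, hcost.symm⟩
  -- pointwise a.e. inequalities with s = 1/2
  set I : ℝ := ∫ p, ‖p.2.1 - p.2.2‖ ^ 2 ∂γt with hIdef
  have hInn : 0 ≤ I := integral_nonneg fun p => by positivity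
  have Iφ : (1 - 2⁻¹) * potential φ ν₁ + 2⁻¹ * potential φ ν₂ - potential φ ν ≤ CK / 4 * I := by
    have hpt : ∀ᵐ p ∂γt, (1 - 2⁻¹) * φ p.2.1 + 2⁻¹ * φ p.2.2 - φ (T p)
        ≤ CK / 4 * ‖p.2.1 - p.2.2‖ ^ 2 := by
      filter_upwards [haeK] with p hp
      have h := hφ p.2.1 hp.2.1 p.2.2 hp.2.2 2⁻¹ (by constructor <;> norm_num)
      calc (1 - 2⁻¹) * φ p.2.1 + 2⁻¹ * φ p.2.2 - φ (T p)
          ≤ CK * 2⁻¹ * (1 - 2⁻¹) * ‖p.2.1 - p.2.2‖ ^ 2 := h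
        _ = CK / 4 * ‖p.2.1 - p.2.2‖ ^ 2 := by ring
    have hadd : Integrable (fun p : Em m × (Em m × Em m) =>
        (1 - 2⁻¹) * φ p.2.1 + 2⁻¹ * φ p.2.2) γt :=
      (hint_f₁.const_mul _).add (hint_f₂.const_mul _)
    have hleft : Integrable (fun p : Em m × (Em m × Em m) =>
        (1 - 2⁻¹) * φ p.2.1 + 2⁻¹ * φ p.2.2 - φ (T p)) γt := hadd.sub hint_fm
    have hq4 : Integrable (fun p : Em m × (Em m × Em m) =>
        CK / 4 * ‖p.2.1 - p.2.2‖ ^ 2) γt := hint_q.const_mul _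
    have := integral_mono_ae hleft hq4 hpt
    rw [integral_sub hadd hint_fm,
      integral_add (hint_f₁.const_mul _) (hint_f₂.const_mul _),
      integral_const_mul, integral_const_mul, integral_const_mul] at this
    rw [e1, e2, ← e5] at this
    exact this
  have Ic : κ / 4 * I ≤ (1 - 2⁻¹) * Ccost c μ ν₁ + 2⁻¹ * Ccost c μ ν₂
      - ∫ p, c p.1 (T p) ∂γt := by
    have hpt : ∀ᵐ p ∂γt, κ / 4 * ‖p.2.1 - p.2.2‖ ^ 2
        ≤ (1 - 2⁻¹) * c p.1 p.2.1 + 2⁻¹ * c p.1 p.2.2 - c p.1 (T p) := by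
      filter_upwards [haeK] with p hp
      have h := hconv p.1 hp.1 p.2.1 hp.2.1 p.2.2 hp.2.2 2⁻¹ (by constructor <;> norm_num)
      calc κ / 4 * ‖p.2.1 - p.2.2‖ ^ 2
          = κ * 2⁻¹ * (1 - 2⁻¹) * ‖p.2.1 - p.2.2‖ ^ 2 := by ring
        _ ≤ _ := h
    have hadd : Integrable (fun p : Em m × (Em m × Em m) =>
        (1 - 2⁻¹) * c p.1 p.2.1 + 2⁻¹ * c p.1 p.2.2) γt :=
      (hint_g₁.const_mul _).add (hint_g₂.const_mul _)
    have hright : Integrable (fun p : Em m × (Em m × Em m) =>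
        (1 - 2⁻¹) * c p.1 p.2.1 + 2⁻¹ * c p.1 p.2.2 - c p.1 (T p)) γt := hadd.sub hint_gm
    have hq4 : Integrable (fun p : Em m × (Em m × Em m) =>
        κ / 4 * ‖p.2.1 - p.2.2‖ ^ 2) γt := hint_q.const_mul _
    have := integral_mono_ae hq4 hright hpt
    rw [integral_sub hadd hint_gm,
      integral_add (hint_g₁.const_mul _) (hint_g₂.const_mul _),
      integral_const_mul, integral_const_mul, integral_const_mul] at this
    rw [e3, e4] at this
    exact this
  -- conclude I = 0
  have hMeq : potential φ ν₂ - Ccost c μ ν₂ = potential φ ν₁ - Ccost c μ ν₁ :=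
    le_antisymm (hmax₁ ν₂ inferInstance hν₂) (hmax₂ ν₁ inferInstance hν₁)
  have hup : potential φ ν - Ccost c μ ν ≤ potential φ ν₁ - Ccost c μ ν₁ :=
    hmax₁ ν inferInstance hνK
  have hI0 : I = 0 := by
    have hfrac : 0 < (κ - CK) / 4 := by linarith
    have : (κ - CK) / 4 * I ≤ 0 := by linarith
    nlinarith
  -- a.e. equality of the two coordinates
  have heqae : ∀ᵐ p ∂γt, p.2.1 = p.2.2 := by
    have h0 := (integral_eq_zero_iff_of_nonneg (fun p => by positivity) hint_q).1 hI0
    filter_upwards [h0] with p hp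
    have hp' : ‖p.2.1 - p.2.2‖ ^ 2 = 0 := hp
    have := pow_eq_zero_iff (n := 2) (by norm_num) |>.1 hp'
    exact sub_eq_zero.1 (norm_eq_zero.1 this)
  -- conclude ν₁ = ν₂
  ext s hs
  have m1 : ν₁ s = γt {p : Em m × (Em m × Em m) | p.2.1 ∈ s} := by
    rw [hγtdef, Statement19Aux.glue_meas_fst μ k₁ k₂ hs, hd₁]
    have : γ₁ {q : Em m × Em m | q.2 ∈ s} = (γ₁.map Prod.snd) s :=
      (Measure.map_apply measurable_snd hs).symm
    rw [this, hγ₁.2]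
  have m2 : ν₂ s = γt {p : Em m × (Em m × Em m) | p.2.2 ∈ s} := by
    rw [hγtdef, Statement19Aux.glue_meas_snd μ k₁ k₂ hs, hd₂]
    have : γ₂ {q : Em m × Em m | q.2 ∈ s} = (γ₂.map Prod.snd) s :=
      (Measure.map_apply measurable_snd hs).symm
    rw [this, hγ₂.2]
  rw [m1, m2]
  refine measure_congr ?_
  rw [Filter.eventuallyEq_set]
  filter_upwards [heqae] with p hp
  simp [hp]
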